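/- For a stable(2/3) variable T with E[e^{−λT}] = exp(−λ^{2/3}) and an independent random variable D with density 2x·1_{[0,1]}(x), and every integer n ≥ 1: E[(D·T^{−1/2})^n] = (2/(n+2))·Γ(3n/4 + 1)/Γ(n/2 + 1). -/

import Mathlib

/-!
By independence, `E[(D T^(-1/2))ⁿ] = E[Dⁿ] · E[T^(-n/2)]`, and `E[Dⁿ] = ∫₀¹ 2x·xⁿ dx = 2/(n+2)`.
The negative moment comes from the Laplace transform: `Γ(s) t^(-s) = ∫₀^∞ λ^(s-1) e^(-λt) dλ`,
so by Tonelli `Γ(s) E[T^(-s)] = ∫₀^∞ λ^(s-1) E[e^(-λT)] dλ = ∫₀^∞ λ^(s-1) e^(-λ^α) dλ = Γ(s/α)/α`,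
i.e. `E[T^(-s)] = Γ(s/α + 1) / Γ(s + 1)`; here `α = 2/3` and `s = n/2`.
-/

open MeasureTheory ProbabilityTheory Set Real

lemma rpow_neg_mul_Gamma_eq_integral {s t : ℝ} (hs : 0 < s) (ht : 0 < t) :
    t ^ (-s) * Gamma s = ∫ l in Ioi (0 : ℝ), l ^ (s - 1) * exp (-l * t) := by
  simp_rw [neg_mul, mul_comm _ t]
  rw [integral_rpow_mul_exp_neg_mul_Ioi hs ht, one_div, inv_rpow ht.le, rpow_neg ht.le]

lemma ofReal_rpow_neg_mul_Gamma_eq_lintegral {s t : ℝ} (hs : 0 < s) (ht : 0 < t) :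
    ENNReal.ofReal (t ^ (-s) * Gamma s) =
      ∫⁻ l in Ioi (0 : ℝ), ENNReal.ofReal (l ^ (s - 1) * exp (-l * t)) := by
  have hint : IntegrableOn (fun l : ℝ => l ^ (s - 1) * exp (-l * t)) (Ioi 0) :=
    (integrableOn_rpow_mul_exp_neg_mul_rpow (s := s - 1) (by linarith) one_pos ht).congr_fun
      (fun l _ => by dsimp only; rw [rpow_one, neg_mul, neg_mul, mul_comm t]) measurableSet_Ioi
  rw [rpow_neg_mul_Gamma_eq_integral hs ht, ofReal_integral_eq_lintegral_ofReal hint]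
  exact (ae_restrict_iff' measurableSet_Ioi).2 (.of_forall fun l hl =>
    mul_nonneg (rpow_nonneg (le_of_lt hl) _) (exp_pos _).le)

section NegativeMoments

variable {Ω : Type*} [MeasurableSpace Ω] {μ : Measure Ω} {T : Ω → ℝ}

lemma lintegral_rpow_neg_mul_Gamma [SFinite μ] (hT : Measurable T) (hTpos : ∀ᵐ ω ∂μ, 0 < T ω)
    {s : ℝ} (hs : 0 < s) :
    (∫⁻ ω, ENNReal.ofReal (T ω ^ (-s)) ∂μ) * ENNReal.ofReal (Gamma s) =
      ∫⁻ l in Ioi (0 : ℝ), ENNReal.ofReal (l ^ (s - 1)) *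
        ∫⁻ ω, ENNReal.ofReal (exp (-l * T ω)) ∂μ := by
  calc (∫⁻ ω, ENNReal.ofReal (T ω ^ (-s)) ∂μ) * ENNReal.ofReal (Gamma s)
      = ∫⁻ ω, (∫⁻ l in Ioi (0 : ℝ), ENNReal.ofReal (l ^ (s - 1) * exp (-l * T ω))) ∂μ := by
        rw [← lintegral_mul_const' _ _ ENNReal.ofReal_ne_top]
        refine lintegral_congr_ae ?_
        filter_upwards [hTpos] with ω hω
        rw [← ENNReal.ofReal_mul (rpow_nonneg hω.le _),
          ofReal_rpow_neg_mul_Gamma_eq_lintegral hs hω]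
    _ = ∫⁻ l in Ioi (0 : ℝ), ∫⁻ ω, ENNReal.ofReal (l ^ (s - 1) * exp (-l * T ω)) ∂μ :=
        lintegral_lintegral_swap (Measurable.aemeasurable (by fun_prop))
    _ = _ := by
        refine setLIntegral_congr_fun measurableSet_Ioi fun l hl => ?_
        simp_rw [ENNReal.ofReal_mul (rpow_nonneg (le_of_lt hl) _)]
        exact lintegral_const_mul _ (by fun_prop)

lemma integrable_exp_neg_mul [IsFiniteMeasure μ] (hT : Measurable T) (hTpos : ∀ᵐ ω ∂μ, 0 < T ω)
    {l : ℝ} (hl : 0 ≤ l) : Integrable (fun ω => exp (-l * T ω)) μ := by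
  refine (integrable_const 1).mono' (by fun_prop) ?_
  filter_upwards [hTpos] with ω hω
  rw [norm_of_nonneg (exp_pos _).le, exp_le_one_iff, neg_mul, neg_nonpos]
  exact mul_nonneg hl hω.le

/-- Both sides are `toReal` of the same `ℝ≥0∞` identity, so no integrability hypothesis is needed:
if `E[T^(-s)] = ∞`, both sides are `0`. -/
theorem integral_rpow_neg_mul_Gamma [IsFiniteMeasure μ] (hT : Measurable T)
    (hTpos : ∀ᵐ ω ∂μ, 0 < T ω) {s : ℝ} (hs : 0 < s) :
    (∫ ω, T ω ^ (-s) ∂μ) * Gamma s =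
      ∫ l in Ioi (0 : ℝ), l ^ (s - 1) * ∫ ω, exp (-l * T ω) ∂μ := by
  have hmoment_nonneg : 0 ≤ᵐ[μ] fun ω => T ω ^ (-s) := by
    filter_upwards [hTpos] with ω hω
    exact rpow_nonneg hω.le _
  have hmellin_nonneg :
      0 ≤ᵐ[volume.restrict (Ioi 0)] fun l : ℝ => l ^ (s - 1) * ∫ ω, exp (-l * T ω) ∂μ :=
    (ae_restrict_iff' measurableSet_Ioi).2 (.of_forall fun l hl =>
      mul_nonneg (rpow_nonneg (le_of_lt hl) _) (integral_nonneg fun _ => (exp_pos _).le))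
  have hlaplace_meas : Measurable fun l : ℝ => ∫ ω, exp (-l * T ω) ∂μ :=
    (StronglyMeasurable.integral_prod_right' (f := fun p : ℝ × Ω => exp (-p.1 * T p.2))
      (by fun_prop)).measurable
  rw [integral_eq_lintegral_of_nonneg_ae hmoment_nonneg (hT.pow_const _).aestronglyMeasurable,
    integral_eq_lintegral_of_nonneg_ae hmellin_nonneg (by fun_prop),
    ← (ENNReal.toReal_ofReal (Gamma_pos_of_pos hs).le), ← ENNReal.toReal_mul,
    lintegral_rpow_neg_mul_Gamma hT hTpos hs]
  congr 1
  refine setLIntegral_congr_fun measurableSet_Ioi fun l hl => ?_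
  rw [ENNReal.ofReal_mul (rpow_nonneg (le_of_lt hl) _), ← ofReal_integral_eq_lintegral_ofReal
    (integrable_exp_neg_mul hT hTpos (le_of_lt hl)) (.of_forall fun _ => (exp_pos _).le)]

theorem integral_rpow_neg_of_laplace_eq_exp_neg_rpow [IsFiniteMeasure μ] (hT : Measurable T)
    (hTpos : ∀ᵐ ω ∂μ, 0 < T ω) {α : ℝ} (hα : 0 < α)
    (hlap : ∀ l : ℝ, 0 ≤ l → ∫ ω, exp (-l * T ω) ∂μ = exp (-(l ^ α))) {s : ℝ} (hs : 0 < s) :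
    ∫ ω, T ω ^ (-s) ∂μ = Gamma (s / α + 1) / Gamma (s + 1) := by
  have hmellin := integral_rpow_neg_mul_Gamma hT hTpos hs
  rw [setIntegral_congr_fun measurableSet_Ioi fun l hl => by rw [hlap l (le_of_lt hl)],
    integral_rpow_mul_exp_neg_rpow hα (by linarith), sub_add_cancel] at hmellin
  rw [Gamma_add_one (by positivity), Gamma_add_one hs.ne', eq_div_iff (by positivity),
    mul_left_comm, hmellin]
  field_simp

end NegativeMoments

lemma integral_pow_withDensity_two_mul_Icc (n : ℕ) :
    ∫ x, x ^ n ∂(volume.withDensity fun x =>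
        ENNReal.ofReal ((Icc 0 1).indicator (fun y => 2 * y) x))
      = 2 / (n + 2) := by
  have hdensity : Measurable fun x : ℝ => (Icc 0 1).indicator (fun y => 2 * y) x :=
    (measurable_const.mul measurable_id).indicator measurableSet_Icc
  rw [integral_withDensity_eq_integral_toReal_smul hdensity.ennreal_ofReal
    (.of_forall fun _ => ENNReal.ofReal_lt_top)]
  have hintegrand : (fun x : ℝ => (ENNReal.ofReal ((Icc 0 1).indicator (fun y => 2 * y) x)).toReal
      • x ^ n) = (Icc 0 1).indicator fun x => 2 * x ^ (n + 1) := by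
    funext x
    by_cases hx : x ∈ Icc (0 : ℝ) 1
    · rw [indicator_of_mem hx, indicator_of_mem hx, ENNReal.toReal_ofReal (by linarith [hx.1]),
        smul_eq_mul, pow_succ]
      ring
    · simp [indicator_of_notMem hx]
  rw [hintegrand, integral_indicator measurableSet_Icc, integral_Icc_eq_integral_Ioc,
    ← intervalIntegral.integral_of_le zero_le_one, intervalIntegral.integral_const_mul,
    integral_pow]
  push_cast
  norm_num
  ring

lemma ProbabilityTheory.IndepFun.integral_mul_pow {Ω : Type*} [MeasurableSpace Ω]
    {μ : Measure Ω} {X Y : Ω → ℝ} (h : IndepFun X Y μ) (hX : AEMeasurable X μ)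
    (hY : AEMeasurable Y μ) (n : ℕ) :
    ∫ ω, (X ω * Y ω) ^ n ∂μ = (∫ ω, X ω ^ n ∂μ) * ∫ ω, Y ω ^ n ∂μ := by
  simp_rw [mul_pow]
  exact (h.comp (measurable_id.pow_const n) (measurable_id.pow_const n))
    |>.integral_mul_eq_mul_integral (hX.pow_const n).aestronglyMeasurable
      (hY.pow_const n).aestronglyMeasurable

theorem stmt_8 {Ω : Type*} [MeasureSpace Ω] (hP : IsProbabilityMeasure (volume : Measure Ω))
    (T D : Ω → ℝ) (hTmeas : Measurable T) (hDmeas : Measurable D)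
    (hTpos : ∀ᵐ ω ∂(volume : Measure Ω), 0 < T ω)
    (hlap : ∀ lam : ℝ, 0 ≤ lam →
      (∫ ω, Real.exp (-lam * T ω)) = Real.exp (-(lam ^ (2 / 3 : ℝ))))
    (hD : Measure.map D volume =
      volume.withDensity (fun x => ENNReal.ofReal (Set.indicator (Set.Icc 0 1) (fun y => 2 * y) x)))
    (hindep : IndepFun D T)
    (n : ℕ) (hn : 1 ≤ n) :
    (∫ ω, (D ω * (T ω) ^ (-(1 / 2) : ℝ)) ^ n) =
      2 / (n + 2) * (Real.Gamma (3 * n / 4 + 1) / Real.Gamma (n / 2 + 1)) := by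
  have hD_moment : ∫ ω, D ω ^ n = 2 / (n + 2) :=
    calc ∫ ω, D ω ^ n = ∫ x, x ^ n ∂(volume.map D) :=
          (integral_map hDmeas.aemeasurable (measurable_id.pow_const n).aestronglyMeasurable).symm
      _ = 2 / (n + 2) := by rw [hD, integral_pow_withDensity_two_mul_Icc]
  have hindep' : IndepFun D (fun ω => T ω ^ (-(1 / 2) : ℝ)) :=
    hindep.comp measurable_id (measurable_id.pow_const _)
  have hT_moment : ∫ ω, (T ω ^ (-(1 / 2) : ℝ)) ^ n = ∫ ω, T ω ^ (-(n / 2 : ℝ)) := by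
    refine integral_congr_ae ?_
    filter_upwards [hTpos] with ω hω
    rw [← rpow_mul_natCast hω.le]
    ring_nf
  rw [hindep'.integral_mul_pow hDmeas.aemeasurable (hTmeas.pow_const _).aemeasurable n,
    hD_moment, hT_moment, integral_rpow_neg_of_laplace_eq_exp_neg_rpow hTmeas hTpos
      (by norm_num) hlap (div_pos (Nat.cast_pos.2 hn) two_pos),
    show (n : ℝ) / 2 / (2 / 3) = 3 * n / 4 by ring]
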